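/- Let F be a string with smallest period p, and fix two starting positions q ∈ [1, p] and ending position q' ∈ [|F| - p + 1, |F|]. The set of squares induced by F that have an occurrence starting at position q equals the set of squares induced by F that have an occurrence ending at position q' if q ≡ q' + 1 (mod p), and the two sets are disjoint otherwise. -/

import Mathlib

/-- `p` is a period of the string (list) `S`. -/
def IsPeriod {α : Type*} (S : List α) (p : ℕ) : Prop :=
  0 < p ∧ ∀ i, i + p < S.length → S[i]? = S[i + p]?

/-- The smallest period of `S`. -/
noncomputable def minPeriod {α : Type*} (S : List α) : ℕ :=
  sInf {p | IsPeriod S p}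

/-- `P` occurs in `S` at (0-indexed) position `i`. -/
def OccursAt {α : Type*} (P S : List α) (i : ℕ) : Prop :=
  (S.drop i).take P.length = P ∧ i + P.length ≤ S.length

/-- The fragment `T[a..b]` (0-indexed, inclusive). -/
def frag {α : Type*} (T : List α) (a b : ℕ) : List α :=
  (T.drop a).take (b + 1 - a)

/-- `T[a..b]` is a run (maximal periodic fragment) of `T`. -/
def IsRun {α : Type*} (T : List α) (a b : ℕ) : Prop :=
  a ≤ b ∧ b < T.length ∧
  2 * minPeriod (frag T a b) ≤ b + 1 - a ∧
  (a = 0 ∨ T[a - 1]? ≠ T[a - 1 + minPeriod (frag T a b)]?) ∧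
  (b + 1 = T.length ∨ T[b + 1]? ≠ T[b + 1 - minPeriod (frag T a b)]?)

/-- The occurrence of the square `U · U` at position `s` of `T` is induced by the run `T[a..b]`. -/
def InducedOcc {α : Type*} (T U : List α) (s a b : ℕ) : Prop :=
  U ≠ [] ∧ IsRun T a b ∧ OccursAt (U ++ U) T s ∧ a ≤ s ∧
  s + 2 * U.length ≤ b + 1 ∧ minPeriod U = minPeriod (frag T a b)

/-- The `k`-th power `V^k` of a string `V`. -/
def listPow {α : Type*} (V : List α) (k : ℕ) : List α :=
  (List.replicate k V).flatten

/-!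
Since `F` has period `p`, an occurrence of a square `U U` with `per U = p` can be slid along `F`
by multiples of `p`. Conversely, two occurrences of `U U` at distance `d` cover a stretch of `F`
with periods `p` and `d`, and `U U` itself has periods `p` and `|U|`; by the Fine–Wilf lemma the
gcd is then a period of `U`, so minimality of `p` gives `p ∣ d` and `p ∣ |U|`. Thus the
occurrences of an induced square are exactly the positions of one residue class mod `p` that fit
into `F`, and an occurrence ending at `q'` starts in the class of `q'`. Both claims reduce to
comparing the residues of `q - 1` and `q'`.
-/

section

variable {α : Type*}

theorem isPeriod_minPeriod (S : List α) : IsPeriod S (minPeriod S) :=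
  Nat.sInf_mem (s := {p | IsPeriod S p}) ⟨S.length + 1, Nat.succ_pos _, fun _ h => by omega⟩

theorem minPeriod_le {S : List α} {p : ℕ} (h : IsPeriod S p) : minPeriod S ≤ p :=
  Nat.sInf_le h

theorem minPeriod_le_length {S : List α} (h : S ≠ []) : minPeriod S ≤ S.length :=
  minPeriod_le ⟨List.length_pos_iff.2 h, fun _ hi => by omega⟩

theorem isPeriod_append_self {U : List α} (hU : U ≠ []) : IsPeriod (U ++ U) U.length := by
  refine ⟨List.length_pos_iff.2 hU, fun i hi => ?_⟩
  simp only [List.length_append] at hi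
  rw [List.getElem?_append_left (by omega), List.getElem?_append_right (by omega),
    Nat.add_sub_cancel]

namespace OccursAt

variable {P S : List α} {s : ℕ}

theorem getElem?_eq (h : OccursAt P S s) {i : ℕ} (hi : i < P.length) : S[s + i]? = P[i]? := by
  conv_rhs => rw [← h.1]
  rw [List.getElem?_take, if_pos hi, List.getElem?_drop]

theorem of_getElem?_eq (hlen : s + P.length ≤ S.length)
    (h : ∀ i < P.length, S[s + i]? = P[i]?) : OccursAt P S s := by
  refine ⟨List.ext_getElem? fun i => ?_, hlen⟩
  rw [List.getElem?_take, List.getElem?_drop]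
  split_ifs with hi
  · exact h i hi
  · exact (List.getElem?_eq_none (not_lt.1 hi)).symm

theorem take_drop {n : ℕ} (h : s + n ≤ S.length) : OccursAt ((S.drop s).take n) S s :=
  ⟨by rw [List.length_take_of_le (by simp; omega)], by simp; omega⟩

end OccursAt

namespace IsPeriod

variable {S T : List α} {a b p : ℕ}

theorem getElem?_eq_of_modEq (hp : IsPeriod S p) {i j : ℕ} (hij : i ≡ j [MOD p])
    (hi : i < S.length) (hj : j < S.length) : S[i]? = S[j]? := by
  suffices key : ∀ k, k < S.length → S[k]? = S[k % p]? by
    rw [key i hi, key j hj, hij]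
  have hp0 := hp.1
  intro k
  induction k using Nat.strong_induction_on with
  | _ k ih =>
    intro hk
    rcases lt_or_ge k p with hkp | hkp
    · rw [Nat.mod_eq_of_lt hkp]
    · have hstep := hp.2 (k - p) (by omega)
      rw [Nat.sub_add_cancel hkp] at hstep
      rw [Nat.mod_eq_sub_mod hkp, ← ih (k - p) (by omega) (by omega), hstep]

theorem of_occursAt (hp : IsPeriod S p) {s : ℕ} (h : OccursAt T S s) : IsPeriod T p := by
  refine ⟨hp.1, fun i hi => ?_⟩
  have hlen := h.2
  rw [← h.getElem?_eq (by omega), ← h.getElem?_eq hi, ← Nat.add_assoc]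
  exact hp.2 _ (by omega)

theorem of_prefix (hp : IsPeriod S p) (h : T <+: S) : IsPeriod T p :=
  hp.of_occursAt (s := 0) ⟨by rw [List.drop_zero, ← List.prefix_iff_eq_take.1 h], by
    simpa using h.length_le⟩

theorem occursAt_of_modEq (hp : IsPeriod S p) {P : List α} {s t : ℕ} (h : OccursAt P S s)
    (hst : s ≡ t [MOD p]) (ht : t + P.length ≤ S.length) : OccursAt P S t := by
  have hs := h.2
  refine OccursAt.of_getElem?_eq ht fun i hi => ?_
  rw [← h.getElem?_eq hi]
  exact hp.getElem?_eq_of_modEq (hst.symm.add_right i) (by omega) (by omega)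

theorem sub (ha : IsPeriod S a) (hb : IsPeriod S b) (hab : a < b) (hn : a + b ≤ S.length) :
    IsPeriod S (b - a) := by
  refine ⟨by omega, fun i hi => ?_⟩
  rcases lt_or_ge (i + b) S.length with hib | hib
  · rw [hb.2 i hib, ha.2 (i + (b - a)) (by omega), Nat.add_assoc, Nat.sub_add_cancel hab.le]
  · have h₁ := ha.2 (i - a) (by omega)
    have h₂ := hb.2 (i - a) (by omega)
    rw [Nat.sub_add_cancel (by omega)] at h₁
    rw [show i - a + b = i + (b - a) by omega] at h₂
    rw [← h₁, h₂]

/-- The Fine–Wilf periodicity lemma (in its weak form, with `a + b` in place of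
`a + b - gcd a b`). -/
theorem gcd (ha : IsPeriod S a) (hb : IsPeriod S b) (hn : a + b ≤ S.length) :
    IsPeriod S (a.gcd b) := by
  induction hm : a + b using Nat.strong_induction_on generalizing a b with
  | _ m ih =>
    wlog hab : a ≤ b generalizing a b
    · rw [Nat.gcd_comm]
      exact this hb ha (by omega) (by omega) (by omega)
    rcases hab.eq_or_lt with rfl | hlt
    · rwa [Nat.gcd_self]
    · rw [← Nat.gcd_sub_self_right hab]
      exact ih b (by have := ha.1; omega) ha (ha.sub hb hlt hn) (by omega) (by omega)

end IsPeriod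

theorem minPeriod_dvd_of_prefix {U W : List α} {d : ℕ} (hUW : U <+: W)
    (hp : IsPeriod W (minPeriod U)) (hd : IsPeriod W d) (hlen : minPeriod U + d ≤ W.length) :
    minPeriod U ∣ d := by
  have hgcd : IsPeriod U ((minPeriod U).gcd d) := (hp.gcd hd hlen).of_prefix hUW
  have hle : (minPeriod U).gcd d = minPeriod U :=
    le_antisymm (Nat.gcd_le_left _ hp.1) (minPeriod_le hgcd)
  exact hle ▸ Nat.gcd_dvd_right _ _

section InducedSquare

variable {F U : List α} (hU : U ≠ []) (hmp : minPeriod U = minPeriod F)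
include hU hmp

theorem minPeriod_dvd_length_of_occursAt {s : ℕ} (hs : OccursAt (U ++ U) F s) :
    minPeriod F ∣ U.length := by
  have hpU := minPeriod_le_length hU
  rw [← hmp]
  refine minPeriod_dvd_of_prefix (List.prefix_append U U) ?_ (isPeriod_append_self hU) ?_
  · rw [hmp]
    exact (isPeriod_minPeriod F).of_occursAt hs
  · simp only [List.length_append]
    omega

theorem modEq_of_occursAt {s t : ℕ} (hs : OccursAt (U ++ U) F s) (ht : OccursAt (U ++ U) F t) :
    s ≡ t [MOD minPeriod F] := by
  wlog hst : s ≤ t generalizing s t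
  · exact (this ht hs (by omega)).symm
  have hpU := minPeriod_le_length hU
  have htF := ht.2
  simp only [List.length_append] at htF
  rcases hst.eq_or_lt with rfl | hlt
  · rfl
  -- `W` is the stretch of `F` covered by both occurrences; it has periods `p` and `t - s`.
  set W := (F.drop s).take (t - s + 2 * U.length) with hW
  have hWF : OccursAt W F s := OccursAt.take_drop (by omega)
  have hWlen : W.length = t - s + 2 * U.length := by simp [hW]; omega
  have hUUW : U ++ U <+: W := by
    rw [List.prefix_iff_eq_take, hW, List.take_take, min_eq_left (by simp; omega)]
    exact hs.1.symm
  have hperiod : IsPeriod W (t - s) := by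
    refine ⟨by omega, fun i hi => ?_⟩
    have hi' : i < (U ++ U).length := by simp only [List.length_append]; omega
    rw [← hWF.getElem?_eq (by omega), ← hWF.getElem?_eq hi, hs.getElem?_eq hi',
      show s + (i + (t - s)) = t + i by omega, ht.getElem?_eq hi']
  rw [← hmp]
  refine (Nat.modEq_iff_dvd' hst).2 (minPeriod_dvd_of_prefix
    ((List.prefix_append U U).trans hUUW) ?_ hperiod (by omega))
  rw [hmp]
  exact (isPeriod_minPeriod F).of_occursAt hWF

theorem occursAt_iff_modEq {s t : ℕ} (hs : OccursAt (U ++ U) F s) :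
    OccursAt (U ++ U) F t ↔ t ≡ s [MOD minPeriod F] ∧ t + 2 * U.length ≤ F.length := by
  have hlen : t + (U ++ U).length = t + 2 * U.length := by simp [two_mul]
  exact ⟨fun ht => ⟨modEq_of_occursAt hU hmp ht hs, hlen ▸ ht.2⟩,
    fun ⟨hts, htF⟩ => (isPeriod_minPeriod F).occursAt_of_modEq hs hts.symm (hlen ▸ htF)⟩

theorem add_two_mul_length_modEq {s : ℕ} (hs : OccursAt (U ++ U) F s) (t : ℕ) :
    t + 2 * U.length ≡ t [MOD minPeriod F] :=
  (Nat.modEq_zero_iff_dvd.2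
    (dvd_mul_of_dvd_right (minPeriod_dvd_length_of_occursAt hU hmp hs) 2)).add_left t

end InducedSquare

end

theorem stmt9_general {α : Type*} (F : List α) (q q' : ℕ)
    (hq1 : 1 ≤ q) (hqp : q ≤ minPeriod F)
    (hq'1 : F.length + 1 ≤ q' + minPeriod F) (hq'2 : q' ≤ F.length) :
    if q % minPeriod F = (q' + 1) % minPeriod F then
      {U : List α | U ≠ [] ∧ minPeriod U = minPeriod F ∧
          OccursAt (U ++ U) F (q - 1)}
        = {U : List α | U ≠ [] ∧ minPeriod U = minPeriod F ∧
            ∃ s, OccursAt (U ++ U) F s ∧ s + 2 * U.length = q'}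
    else
      Disjoint
        {U : List α | U ≠ [] ∧ minPeriod U = minPeriod F ∧
          OccursAt (U ++ U) F (q - 1)}
        {U : List α | U ≠ [] ∧ minPeriod U = minPeriod F ∧
          ∃ s, OccursAt (U ++ U) F s ∧ s + 2 * U.length = q'} := by
  split_ifs with hqq
  · have hmod : q - 1 ≡ q' [MOD minPeriod F] :=
      Nat.ModEq.add_right_cancel' 1 (by rwa [Nat.sub_add_cancel hq1])
    ext U
    constructor
    · rintro ⟨hU, hmp, hocc⟩
      have hshift := add_two_mul_length_modEq hU hmp hocc
      have hfit := ((occursAt_iff_modEq hU hmp hocc).1 hocc).2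
      have hend : q - 1 + 2 * U.length ≤ q' := ((hshift _).trans hmod).le_of_lt_add (by omega)
      refine ⟨hU, hmp, q' - 2 * U.length,
        (occursAt_iff_modEq hU hmp hocc).2 ⟨?_, by omega⟩, by omega⟩
      calc q' - 2 * U.length ≡ q' - 2 * U.length + 2 * U.length [MOD minPeriod F] :=
            (hshift _).symm
        _ = q' := by omega
        _ ≡ q - 1 [MOD minPeriod F] := hmod.symm
    · rintro ⟨hU, hmp, s, hocc, rfl⟩
      have hs : q - 1 ≡ s [MOD minPeriod F] :=
        hmod.trans (add_two_mul_length_modEq hU hmp hocc s)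
      have hle : q - 1 ≤ s := hs.le_of_lt_add (by omega)
      exact ⟨hU, hmp, (occursAt_iff_modEq hU hmp hocc).2 ⟨hs, by omega⟩⟩
  · rw [Set.disjoint_left]
    rintro U ⟨hU, hmp, hocc⟩ ⟨-, -, s, hocc', rfl⟩
    apply hqq
    have hs : q - 1 ≡ s + 2 * U.length [MOD minPeriod F] :=
      (modEq_of_occursAt hU hmp hocc hocc').trans (add_two_mul_length_modEq hU hmp hocc' s).symm
    have hs' := hs.add_right 1
    rwa [Nat.sub_add_cancel hq1] at hs'

/-- Let `F` have smallest period `p`, `q ∈ [1, p]`, `q' ∈ [|F| - p + 1, |F|]`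
(1-indexed). The set of squares induced by `F` with an occurrence starting at `q`
equals the set of squares induced by `F` with an occurrence ending at `q'` if
`q ≡ q' + 1 (mod p)`, and the two sets are disjoint otherwise. -/
theorem stmt9 {α : Type*} (F : List α) (q q' : ℕ)
    (hper : 2 * minPeriod F ≤ F.length)
    (hq1 : 1 ≤ q) (hqp : q ≤ minPeriod F)
    (hq'1 : F.length + 1 ≤ q' + minPeriod F) (hq'2 : q' ≤ F.length) :
    if q % minPeriod F = (q' + 1) % minPeriod F then
      {U : List α | U ≠ [] ∧ minPeriod U = minPeriod F ∧
          OccursAt (U ++ U) F (q - 1)}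
        = {U : List α | U ≠ [] ∧ minPeriod U = minPeriod F ∧
            ∃ s, OccursAt (U ++ U) F s ∧ s + 2 * U.length = q'}
    else
      Disjoint
        {U : List α | U ≠ [] ∧ minPeriod U = minPeriod F ∧
          OccursAt (U ++ U) F (q - 1)}
        {U : List α | U ≠ [] ∧ minPeriod U = minPeriod F ∧
          ∃ s, OccursAt (U ++ U) F s ∧ s + 2 * U.length = q'} :=
  stmt9_general F q q' hq1 hqp hq'1 hq'2
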